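/- Existential-quantifier simulation in planning: Let I be a planning instance in which variable p occurs in no action, variable x occurs in no effect, and p is false in the initial state. Construct I' by adding actions ⟨¬p, {x, p}⟩ and ⟨¬p, {¬x, p}⟩ and conjoining p to the precondition of every original action. Then I' has a plan if and only if the instance obtained from I by fixing x to true in the initial state has a plan, or the instance obtained from I by fixing x to false in the initial state has a plan. -/

import Mathlib

/-- Propositional formulas over variables indexed by `Nat`. -/
inductive Fm where
  | var : Nat → Fm
  | tru : Fm
  | fls : Fm
  | neg : Fm → Fm
  | conj : Fm → Fm → Fm
  | disj : Fm → Fm → Fm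
deriving DecidableEq

/-- Evaluation of a formula under an assignment. -/
def Fm.eval (σ : Nat → Bool) : Fm → Bool
  | .var n => σ n
  | .tru => true
  | .fls => false
  | .neg F => !(F.eval σ)
  | .conj F G => F.eval σ && G.eval σ
  | .disj F G => F.eval σ || G.eval σ

/-- `F.subst x v` replaces every occurrence of variable `x` by the constant `v`. -/
def Fm.subst (x : Nat) (v : Bool) : Fm → Fm
  | .var n => if n = x then (if v then .tru else .fls) else .var n
  | .tru => .tru
  | .fls => .fls
  | .neg F => .neg (F.subst x v)
  | .conj F G => .conj (F.subst x v) (G.subst x v)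
  | .disj F G => .disj (F.subst x v) (G.subst x v)

/-- `F.occurs x` : variable `x` occurs in `F`. -/
def Fm.occurs (x : Nat) : Fm → Prop
  | .var n => n = x
  | .tru => False
  | .fls => False
  | .neg F => F.occurs x
  | .conj F G => F.occurs x ∨ G.occurs x
  | .disj F G => F.occurs x ∨ G.occurs x

/-- A STRIPS-style action with a formula precondition and a list of literal effects. -/
structure PAct where
  pre : Fm
  eff : List (Nat × Bool)
deriving DecidableEq

/-- Applying an action to a state: effect literals are set, other variables unchanged. -/
def PAct.apply (a : PAct) (s : Nat → Bool) : Nat → Bool :=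
  fun n => match a.eff.lookup n with
    | some v => v
    | none => s n

/-- A planning instance: a set of available actions, an initial state, and a goal formula. -/
structure PInst where
  acts : Set PAct
  init : Nat → Bool
  goal : Fm

/-- `Reach A s π s'` : executing the sequence `π` of actions of `A` from state `s`
is possible (each precondition holds when the action is executed) and ends in `s'`. -/
def Reach (A : Set PAct) : (Nat → Bool) → List PAct → (Nat → Bool) → Prop
  | s, [], s' => s' = s
  | s, a :: π, s' => a ∈ A ∧ a.pre.eval s = true ∧ Reach A (a.apply s) π s'

/-- `π` is a plan for the instance `I`. -/
def IsPlan (I : PInst) (π : List PAct) : Prop :=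
  ∃ s, Reach I.acts I.init π s ∧ I.goal.eval s = true

/-- The instance has a plan. -/
def HasPlan (I : PInst) : Prop := ∃ π, IsPlan I π

/-- The two new actions of the existential-quantifier construction. -/
def setX (x p : Nat) (v : Bool) : PAct := ⟨.neg (.var p), [(x, v), (p, true)]⟩

/-- Conjoin `p` to the precondition of an action. -/
def pguard (p : Nat) (a : PAct) : PAct := ⟨.conj (.var p) a.pre, a.eff⟩

/-- The merged instance `I'` of the existential-quantifier construction. -/
def existMerge (I : PInst) (x p : Nat) : PInst :=
  ⟨{setX x p true, setX x p false} ∪ pguard p '' I.acts, I.init, I.goal⟩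

/-!
In `I'` the variable `p` starts false, and while it is false only the two new actions are
enabled. Each of them fixes `x` and sets `p` for good; from then on exactly the guarded copies
of the original actions are enabled, and they act on the variables other than `p` as the
originals do. Hence a nonempty plan of `I'` is `setX v` followed by a plan of `I` with `x`
fixed to `v`, and the empty plan is a plan of `I` with `x` fixed to its initial value.
-/

theorem Fm.eval_update_of_not_occurs {p : Nat} (b : Bool) (σ : Nat → Bool) :
    ∀ {F : Fm}, ¬ F.occurs p → F.eval (Function.update σ p b) = F.eval σ
  | .var _, h => Function.update_of_ne h _ _
  | .tru, _ | .fls, _ => rfl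
  | .neg F, h => by simp only [Fm.eval, eval_update_of_not_occurs (F := F) b σ h]
  | .conj F G, h | .disj F G, h => by
    obtain ⟨hF, hG⟩ := not_or.1 h
    simp only [Fm.eval, eval_update_of_not_occurs (F := F) b σ hF,
      eval_update_of_not_occurs (F := G) b σ hG]

theorem PAct.apply_update_of_not_mem_eff {a : PAct} {p : Nat} (h : ∀ v, (p, v) ∉ a.eff)
    (b : Bool) (σ : Nat → Bool) :
    a.apply (Function.update σ p b) = Function.update (a.apply σ) p b := by
  have hlookup : a.eff.lookup p = none :=
    List.lookup_eq_none_iff.2 fun ⟨k, v⟩ hkv => by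
      have hpk : p ≠ k := by rintro rfl; exact h v hkv
      simpa using hpk
  funext n
  by_cases hn : n = p
  · subst hn
    simp [PAct.apply, hlookup]
  · simp only [PAct.apply, Function.update_of_ne hn]

theorem setX_apply {x p : Nat} (hxp : x ≠ p) (v : Bool) (σ : Nat → Bool) :
    (setX x p v).apply σ = Function.update (Function.update σ x v) p true := by
  funext n
  by_cases hnp : n = p
  · subst hnp
    simp [setX, PAct.apply, List.lookup_cons, beq_eq_false_iff_ne.2 hxp.symm]
  · by_cases hnx : n = x
    · subst hnx
      simp [setX, PAct.apply, Function.update_of_ne hnp]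
    · simp [setX, PAct.apply, List.lookup_cons, beq_eq_false_iff_ne.2 hnx,
        beq_eq_false_iff_ne.2 hnp, Function.update_of_ne hnx, Function.update_of_ne hnp]

theorem Reach.mono {A B : Set PAct} (hAB : A ⊆ B) :
    ∀ {σ π σ'}, Reach A σ π σ' → Reach B σ π σ'
  | _, [], _, h => h
  | _, _ :: _, _, ⟨ha, hpre, h⟩ => ⟨hAB ha, hpre, h.mono hAB⟩

section Guard

variable {A : Set PAct} {p : Nat} (hA : ∀ a ∈ A, ¬ a.pre.occurs p ∧ ∀ v, (p, v) ∉ a.eff)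
include hA

theorem reach_pguard_update_of_reach :
    ∀ {σ π σ'}, Reach A σ π σ' →
      Reach (pguard p '' A) (Function.update σ p true) (π.map (pguard p))
        (Function.update σ' p true)
  | _, [], _, h => by rw [h]; rfl
  | σ, a :: _, _, ⟨ha, hpre, h⟩ => by
    refine ⟨Set.mem_image_of_mem _ ha, ?_, ?_⟩
    · simp [pguard, Fm.eval, Fm.eval_update_of_not_occurs _ _ (hA a ha).1, hpre]
    · change Reach _ (a.apply _) _ _
      rw [PAct.apply_update_of_not_mem_eff (hA a ha).2]
      exact reach_pguard_update_of_reach h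

theorem exists_reach_of_reach_union_pguard {B : Set PAct}
    (hB : ∀ b ∈ B, ∀ σ, σ p = true → b.pre.eval σ = false) :
    ∀ {σ ρ σ'}, Reach (B ∪ pguard p '' A) (Function.update σ p true) ρ σ' →
      ∃ π σ'', Reach A σ π σ'' ∧ σ' = Function.update σ'' p true
  | σ, [], _, h => ⟨[], σ, rfl, h⟩
  | σ, _ :: _, _, ⟨hmem, hpre, h⟩ => by
    rcases hmem with hb | ⟨a, ha, rfl⟩
    · simp [hB _ hb _ (Function.update_self ..)] at hpre
    · have hpre' : a.pre.eval σ = true := by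
        simpa [pguard, Fm.eval, Fm.eval_update_of_not_occurs _ _ (hA a ha).1] using hpre
      change Reach _ (a.apply _) _ _ at h
      rw [PAct.apply_update_of_not_mem_eff (hA a ha).2] at h
      obtain ⟨π, σ'', hπ, rfl⟩ := exists_reach_of_reach_union_pguard hB h
      exact ⟨a :: π, σ'', ⟨ha, hpre', hπ⟩, rfl⟩

end Guard

section ExistMerge

variable {I : PInst} {x p : Nat} (hxp : x ≠ p)
  (hpAct : ∀ a ∈ I.acts, ¬ a.pre.occurs p ∧ ∀ v, (p, v) ∉ a.eff)
  (hpInit : I.init p = false) (hpGoal : ¬ I.goal.occurs p)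
include hxp hpAct hpInit hpGoal

theorem hasPlan_existMerge_of_hasPlan_update (v : Bool)
    (h : HasPlan ⟨I.acts, Function.update I.init x v, I.goal⟩) :
    HasPlan (existMerge I x p) := by
  obtain ⟨π, σ, hπ, hgoal⟩ := h
  refine ⟨setX x p v :: π.map (pguard p), Function.update σ p true, ⟨?_, ?_, ?_⟩, ?_⟩
  · cases v <;> simp [existMerge]
  · simp [existMerge, setX, Fm.eval, hpInit]
  · rw [existMerge, setX_apply hxp]
    exact (reach_pguard_update_of_reach hpAct hπ).mono Set.subset_union_right
  · rwa [existMerge, Fm.eval_update_of_not_occurs _ _ hpGoal]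

theorem exists_hasPlan_update_of_hasPlan_existMerge (h : HasPlan (existMerge I x p)) :
    ∃ v, HasPlan ⟨I.acts, Function.update I.init x v, I.goal⟩ := by
  obtain ⟨_ | ⟨a, ρ⟩, σ, hρ, hgoal⟩ := h
  · refine ⟨I.init x, [], σ, ?_, hgoal⟩
    rwa [Function.update_eq_self]
  · obtain ⟨hmem, hpre, hρ⟩ := hρ
    obtain ⟨v, rfl⟩ : ∃ v, a = setX x p v := by
      rcases hmem with (rfl | rfl) | ⟨b, -, rfl⟩
      · exact ⟨true, rfl⟩
      · exact ⟨false, rfl⟩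
      · simp [existMerge, pguard, Fm.eval, hpInit] at hpre
    rw [existMerge, setX_apply hxp] at hρ
    have hB : ∀ b ∈ ({setX x p true, setX x p false} : Set PAct), ∀ σ : Nat → Bool,
        σ p = true → b.pre.eval σ = false := by
      rintro b (rfl | rfl) σ hσ <;> simp [setX, Fm.eval, hσ]
    obtain ⟨π, σ'', hπ, rfl⟩ := exists_reach_of_reach_union_pguard hpAct hB hρ
    exact ⟨v, π, σ'', hπ, (Fm.eval_update_of_not_occurs _ _ hpGoal).symm.trans hgoal⟩

end ExistMerge

theorem exists_simulation_planning_general (I : PInst) (x p : Nat) (hxp : x ≠ p)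
    (hpAct : ∀ a ∈ I.acts, ¬ a.pre.occurs p ∧ ∀ v, (p, v) ∉ a.eff)
    (hpInit : I.init p = false) (hpGoal : ¬ I.goal.occurs p) :
    HasPlan (existMerge I x p) ↔
      (HasPlan ⟨I.acts, Function.update I.init x true, I.goal⟩ ∨
       HasPlan ⟨I.acts, Function.update I.init x false, I.goal⟩) := by
  constructor
  · intro h
    obtain ⟨v, hv⟩ := exists_hasPlan_update_of_hasPlan_existMerge hxp hpAct hpInit hpGoal h
    cases v
    exacts [Or.inr hv, Or.inl hv]
  · rintro (h | h) <;> exact hasPlan_existMerge_of_hasPlan_update hxp hpAct hpInit hpGoal _ h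

/-- existential-quantifier simulation in planning: the merged
instance `I'` has a plan iff `I` with `x` fixed to true in the initial state
has a plan, or `I` with `x` fixed to false has a plan. -/
theorem exists_simulation_planning (I : PInst) (x p : Nat) (hxp : x ≠ p)
    (hpAct : ∀ a ∈ I.acts, ¬ a.pre.occurs p ∧ ∀ v, (p, v) ∉ a.eff)
    (hxEff : ∀ a ∈ I.acts, ∀ v, (x, v) ∉ a.eff)
    (hpInit : I.init p = false) (hpGoal : ¬ I.goal.occurs p) :
    HasPlan (existMerge I x p) ↔
      (HasPlan ⟨I.acts, Function.update I.init x true, I.goal⟩ ∨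
       HasPlan ⟨I.acts, Function.update I.init x false, I.goal⟩) :=
  exists_simulation_planning_general I x p hxp hpAct hpInit hpGoal
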